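/- Let g: R² → R be smooth, radial, 0 ≤ g ≤ 1/4, with g > 0 exactly on the open annulus S = {1/4 < √(x²+y²) < 3/4}. Define u(x,y,t) = t − (1−t²)g(x,y) on Ω = {x²+y²<1, |t|<1} ⊂ H¹. Then for every ξ₀ = (x₀,y₀,t₀) ∈ Ω with (x₀,y₀) ∈ B_{R²}(0,1/4), the horizontal subdifferential ∂_H u(ξ₀) is empty. -/

import Mathlib

/-- A point of the first Heisenberg group `ℍ¹ = ℝ³`, coordinates `(x, y, t)`. -/
abbrev H1 := ℝ × ℝ × ℝ

/-- Heisenberg group law on `ℍ¹`. -/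
def hmul1 (ξ η : H1) : H1 :=
  (ξ.1 + η.1, ξ.2.1 + η.2.1, ξ.2.2 + η.2.2 + 2 * (ξ.2.1 * η.1 - ξ.1 * η.2.1))

/-- Heisenberg inverse on `ℍ¹`. -/
def hinv1 (ξ : H1) : H1 := (-ξ.1, -ξ.2.1, -ξ.2.2)

/-- Heisenberg dilation on `ℍ¹`. -/
def hdil1 (l : ℝ) (ξ : H1) : H1 := (l * ξ.1, l * ξ.2.1, l ^ 2 * ξ.2.2)

/-- The horizontal plane at `ξ₀ = (x₀,y₀,t₀)`: `t = t₀ + 2(x y₀ - x₀ y)`. -/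
def Hplane1 (ξ₀ : H1) : Set H1 :=
  {ξ | ξ.2.2 = ξ₀.2.2 + 2 * (ξ.1 * ξ₀.2.1 - ξ₀.1 * ξ.2.1)}

/-- Dot product on `ℝ²`. -/
def dot2 (p q : ℝ × ℝ) : ℝ := p.1 * q.1 + p.2 * q.2

/-- The horizontal subdifferential on `ℍ¹`. -/
def subdiff1 (Ω : Set H1) (u : H1 → ℝ) (ξ₀ : H1) : Set (ℝ × ℝ) :=
  {p | ∀ ξ ∈ Ω ∩ Hplane1 ξ₀, u ξ ≥ u ξ₀ + dot2 p (ξ.1 - ξ₀.1, ξ.2.1 - ξ₀.2.1)}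

/-- `H`-convexity of a function on a subset of `ℍ¹`. -/
def HConvexOn1 (S : Set H1) (u : H1 → ℝ) : Prop :=
  ∀ ξ₁ ∈ S, ∀ ξ₂ ∈ S, ξ₁ ∈ Hplane1 ξ₂ → ∀ l ∈ Set.Icc (0 : ℝ) 1,
    u (hmul1 ξ₁ (hdil1 l (hmul1 (hinv1 ξ₁) ξ₂))) ≤ (1 - l) * u ξ₁ + l * u ξ₂

set_option maxHeartbeats 1000000 in
/-- For `u(x,y,t) = t - (1-t²)g(x,y)` with `g` smooth, radial, `0 ≤ g ≤ 1/4`,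
`g > 0` exactly on the annulus `1/4 < r < 3/4`, the horizontal subdifferential
of `u` is empty at every `ξ₀ ∈ Ω` whose projection lies in `B(0,1/4)`. -/
theorem empty_subdifferential_example (g : ℝ × ℝ → ℝ)
    (hsmooth : ContDiff ℝ (⊤ : ℕ∞) g)
    (hradial : ∀ p q : ℝ × ℝ, p.1 ^ 2 + p.2 ^ 2 = q.1 ^ 2 + q.2 ^ 2 → g p = g q)
    (hg0 : ∀ p, 0 ≤ g p) (hg14 : ∀ p, g p ≤ 1 / 4)
    (hpos : ∀ p : ℝ × ℝ, 0 < g p ↔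
      (1 / 16 < p.1 ^ 2 + p.2 ^ 2 ∧ p.1 ^ 2 + p.2 ^ 2 < 9 / 16)) :
    ∀ ξ₀ ∈ {ξ : H1 | ξ.1 ^ 2 + ξ.2.1 ^ 2 < 1 ∧ |ξ.2.2| < 1},
      ξ₀.1 ^ 2 + ξ₀.2.1 ^ 2 < 1 / 16 →
      subdiff1 {ξ : H1 | ξ.1 ^ 2 + ξ.2.1 ^ 2 < 1 ∧ |ξ.2.2| < 1}
        (fun ξ => ξ.2.2 - (1 - ξ.2.2 ^ 2) * g (ξ.1, ξ.2.1)) ξ₀ = ∅ := by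
  rintro ⟨x₀, y₀, t₀⟩ ⟨hxy, ht⟩ hball
  simp only [Set.mem_setOf_eq] at hxy ht hball
  rw [Set.eq_empty_iff_forall_notMem]
  rintro ⟨p1, p2⟩ hp
  have ht2 : t₀ ^ 2 < 1 := by
    have := abs_lt.1 ht; nlinarith [this.1, this.2]
  -- g vanishes at the center projection
  have hgz : g (x₀, y₀) = 0 := by
    refine le_antisymm ?_ (hg0 _)
    by_contra h
    have h' := (hpos (x₀, y₀)).1 (not_le.mp h)
    simp at h'
    linarith [h'.1]
  -- value of g on the circle of radius 1/2
  set G := g (1/2, 0) with hG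
  have hGpos : 0 < G := by
    rw [hG]; rw [hpos]; norm_num
  -- key inequality from the subdifferential property
  have key : ∀ x y : ℝ, x * y₀ - x₀ * y = 0 → x ^ 2 + y ^ 2 < 1 →
      -((1 - t₀ ^ 2) * g (x, y)) ≥ p1 * (x - x₀) + p2 * (y - y₀) := by
    intro x y hline hlt
    have hmem : ((x, y, t₀) : H1) ∈
        ({ξ : H1 | ξ.1 ^ 2 + ξ.2.1 ^ 2 < 1 ∧ |ξ.2.2| < 1} ∩ Hplane1 (x₀, y₀, t₀)) := by
      constructor
      · exact ⟨hlt, ht⟩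
      · simp only [Hplane1, Set.mem_setOf_eq]
        rw [hline]; ring
    have := hp _ hmem
    simp only [dot2, hgz] at this
    simp at this
    linarith
  rcases eq_or_lt_of_le (by positivity : (0:ℝ) ≤ x₀ ^ 2 + y₀ ^ 2) with hzero | hposr
  · -- center case: x₀ = y₀ = 0
    have hx0 : x₀ = 0 := by nlinarith
    have hy0 : y₀ = 0 := by nlinarith
    have h1 := key (1/2) 0 (by rw [hx0, hy0]; ring) (by norm_num)
    have h2 := key (-(1/2)) 0 (by rw [hx0, hy0]; ring) (by norm_num)
    have hg1 : g (1/2, 0) = G := rfl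
    have hg2 : g (-(1/2), 0) = G := hradial _ _ (by norm_num)
    rw [hg1, hx0, hy0] at h1
    rw [hg2, hx0, hy0] at h2
    nlinarith [mul_pos (by nlinarith : (0:ℝ) < 1 - t₀ ^ 2) hGpos]
  · -- off-center case
    set r := Real.sqrt (x₀ ^ 2 + y₀ ^ 2) with hr
    have hr2 : r ^ 2 = x₀ ^ 2 + y₀ ^ 2 := Real.sq_sqrt (le_of_lt hposr)
    have hrpos : 0 < r := Real.sqrt_pos.2 hposr
    have hrlt : r < 1/4 := by nlinarith
    have hcirc : ∀ s : ℝ, (s * x₀) ^ 2 + (s * y₀) ^ 2 = s ^ 2 * r ^ 2 := by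
      intro s; rw [hr2]; ring
    have hs : ∀ s : ℝ, s ^ 2 * r ^ 2 = 1/4 →
        -((1 - t₀ ^ 2) * G) ≥ p1 * (s * x₀ - x₀) + p2 * (s * y₀ - y₀) := by
      intro s hsr
      have hgs : g (s * x₀, s * y₀) = G :=
        hradial _ _ (by rw [hcirc, hsr]; norm_num)
      have := key (s * x₀) (s * y₀) (by ring) (by rw [hcirc, hsr]; norm_num)
      rw [hgs] at this; exact this
    set s₀ := 1 / (2 * r) with hs₀
    have hs₀sq : s₀ ^ 2 * r ^ 2 = 1/4 := by
      field_simp [hs₀]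
      rw [hs₀]; field_simp [hrpos.ne']; ring
    have hs₀big : 2 < s₀ := by
      rw [hs₀]
      rw [lt_div_iff₀ (by linarith : (0:ℝ) < 2 * r)]
      linarith
    have h1 := hs s₀ hs₀sq
    have h2 := hs (-s₀) (by rw [neg_pow]; simpa using hs₀sq)
    set d := p1 * x₀ + p2 * y₀ with hd
    have h1' : (s₀ - 1) * d ≤ -((1 - t₀ ^ 2) * G) := by nlinarith [h1]
    have h2' : (-s₀ - 1) * d ≤ -((1 - t₀ ^ 2) * G) := by nlinarith [h2]
    have hK : 0 < (1 - t₀ ^ 2) * G := mul_pos (by nlinarith) hGpos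
    clear_value G r s₀ d
    clear hp key hs hsmooth hradial hpos hg0 hg14 h1 h2 hs₀sq hcirc hgz
    have hsum : (s₀ - 1) * d + (-s₀ - 1) * d = -2 * d := by ring
    have hdK : (1 - t₀ ^ 2) * G ≤ d := by linarith
    have hd0 : 0 < d := lt_of_lt_of_le hK hdK
    have hprod : 0 < (s₀ - 1) * d := mul_pos (by linarith) hd0
    linarith
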